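/- In the ring ℚ[[q]], let D = q d/dq and let X, X_1, X_2, Y satisfy X_1 = D X and X_2 = D X_1. Suppose the relation D Y = (2/5)(L^5 − 1) + 2(L^5 − 1)X − 2X^2 − 4X_1 + (L^5 − 1)Y − Y^2 − 2XY holds. Then the ℂ[L^{±1}]-subalgebra ℂ[L^{±1}][X, X_1, X_2, Y] of ℚ[[q]] is closed under D, provided additionally D X_2 is expressed by the relation B_4 = −(L^5−1)(10B_3 − 35B_2 + 50B_1 − 24), where B_1 = −5X, B_2 = 25(X_1+X^2), B_3 = −125(X_2 + 3XX_1 + X^3), B_4 = 625(DX_2 + 4XX_2 + 3X_1^2 + 6X^2X_1 + X^4), and D L = (L^6 − L)/5. -/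

import Mathlib

open PowerSeries Algebra

/-! A derivation preserves the subalgebra generated by a set as soon as it maps the generators
into it, by the Leibniz rule. So it suffices to write `D` of each of `L, L⁻¹, 𝒳, 𝒳₁, 𝒳₂, 𝒴` as a
polynomial in these generators: for `L`, `𝒳`, `𝒳₁`, `𝒳₂` and `𝒴` this is what the hypotheses
say, and for `L⁻¹` the Leibniz rule applied to `L * L⁻¹ = 1` gives `5 D L⁻¹ = L⁻¹ - L⁴`. -/

theorem Derivation.mapsTo_adjoin {R A : Type*} [CommSemiring R] [CommSemiring A] [Algebra R A]
    (d : Derivation R A A) {s : Set A} (h : Set.MapsTo d s (adjoin R s)) :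
    Set.MapsTo d (adjoin R s) (adjoin R s) := fun a ha => by
  induction ha using Algebra.adjoin_induction with
  | mem a ha => exact h ha
  | algebraMap r => simp
  | add a b _ _ ha hb => simpa using add_mem ha hb
  | mul a b ha' hb' ha hb => simpa using add_mem (mul_mem ha' hb) (mul_mem hb' ha)

theorem Subalgebra.mem_of_natCast_mul_mem {K A : Type*} [Field K] [CharZero K] [Ring A]
    [Algebra K A] {S : Subalgebra K A} {n : ℕ} (hn : n ≠ 0) {a : A} (h : (n : A) * a ∈ S) :
    a ∈ S := by
  rw [← nsmul_eq_mul, ← Nat.cast_smul_eq_nsmul K] at h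
  simpa [smul_smul, hn] using S.smul_mem h (n : K)⁻¹

namespace PowerSeries

variable (R : Type*) [CommRing R]

noncomputable def qDerivation : Derivation R R⟦X⟧ R⟦X⟧ := (X : R⟦X⟧) • d⁄dX R

variable {R} in
theorem qDerivation_apply (f : R⟦X⟧) : qDerivation R f = X * d⁄dX R f := rfl

end PowerSeries

/-- Closedness under `D = q·d/dq` of the subalgebra generated by
`L, L⁻¹, 𝒳, 𝒳₁, 𝒳₂, 𝒴` of `ℚ[[q]]`, given the differential relations. -/
theorem formal_quintic_ring_closed_under_D
    (D : PowerSeries ℚ → PowerSeries ℚ)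
    (hD : ∀ F, D F = PowerSeries.X * d⁄dX ℚ F)
    (L Linv x x1 x2 y : PowerSeries ℚ)
    (hInv : L * Linv = 1)
    (hDL : 5 * D L = L ^ 6 - L)
    (hx1 : x1 = D x) (hx2 : x2 = D x1)
    (hY : D y = PowerSeries.C (2 / 5 : ℚ) * (L ^ 5 - 1) + 2 * (L ^ 5 - 1) * x
        - 2 * x ^ 2 - 4 * x1 + (L ^ 5 - 1) * y - y ^ 2 - 2 * x * y)
    (hB4 : 625 * (D x2 + 4 * x * x2 + 3 * x1 ^ 2 + 6 * x ^ 2 * x1 + x ^ 4) =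
        -(L ^ 5 - 1) * (10 * (-125 * (x2 + 3 * x * x1 + x ^ 3))
          - 35 * (25 * (x1 + x ^ 2)) + 50 * (-5 * x) - 24)) :
    ∀ F ∈ Algebra.adjoin ℚ ({L, Linv, x, x1, x2, y} : Set (PowerSeries ℚ)),
      D F ∈ Algebra.adjoin ℚ ({L, Linv, x, x1, x2, y} : Set (PowerSeries ℚ)) := by
  obtain rfl : D = qDerivation ℚ := funext fun F => (hD F).trans (qDerivation_apply F).symm
  set A := adjoin ℚ ({L, Linv, x, x1, x2, y} : Set ℚ⟦X⟧)
  -- Polynomials in these elements of `A` coerce to the same polynomials in `ℚ⟦X⟧` definitionally.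
  let L' : A := ⟨L, subset_adjoin (by simp)⟩
  let Linv' : A := ⟨Linv, subset_adjoin (by simp)⟩
  let x' : A := ⟨x, subset_adjoin (by simp)⟩
  let x1' : A := ⟨x1, subset_adjoin (by simp)⟩
  let x2' : A := ⟨x2, subset_adjoin (by simp)⟩
  let y' : A := ⟨y, subset_adjoin (by simp)⟩
  have hDLinv : 5 * qDerivation ℚ Linv = Linv - L ^ 4 := by
    have hLeibniz := (qDerivation ℚ).leibniz_of_mul_eq_one (mul_comm L Linv ▸ hInv)
    rw [smul_eq_mul] at hLeibniz
    linear_combination 5 * hLeibniz - Linv ^ 2 * hDL + (Linv - L ^ 4 * (L * Linv + 1)) * hInv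
  have hDx2 : 625 * qDerivation ℚ x2 = (L ^ 5 - 1) * (1250 * x2 + 3750 * x * x1 + 1250 * x ^ 3
      + 875 * x1 + 875 * x ^ 2 + 250 * x + 24) - 625 * (4 * x * x2 + 3 * x1 ^ 2
      + 6 * x ^ 2 * x1 + x ^ 4) := by
    linear_combination hB4
  refine (qDerivation ℚ).mapsTo_adjoin ?_
  rintro g (rfl | rfl | rfl | rfl | rfl | rfl)
  · exact Subalgebra.mem_of_natCast_mul_mem (n := 5) (by norm_num) (hDL ▸ (L' ^ 6 - L').prop)
  · exact Subalgebra.mem_of_natCast_mul_mem (n := 5) (by norm_num)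
      (hDLinv ▸ (Linv' - L' ^ 4).prop)
  · exact hx1 ▸ x1'.prop
  · exact hx2 ▸ x2'.prop
  · exact Subalgebra.mem_of_natCast_mul_mem (n := 625) (by norm_num) (hDx2 ▸
      ((L' ^ 5 - 1) * (1250 * x2' + 3750 * x' * x1' + 1250 * x' ^ 3 + 875 * x1' + 875 * x' ^ 2
        + 250 * x' + 24) - 625 * (4 * x' * x2' + 3 * x1' ^ 2 + 6 * x' ^ 2 * x1' + x' ^ 4)).prop)
  · exact hY ▸ (algebraMap ℚ A (2 / 5) * (L' ^ 5 - 1) + 2 * (L' ^ 5 - 1) * x' - 2 * x' ^ 2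
      - 4 * x1' + (L' ^ 5 - 1) * y' - y' ^ 2 - 2 * x' * y').prop
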